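/- Let r ∈ [n] with 2r ≤ n, π ∈ S_{2r}, and let (σ₁,τ₁),...,(σ_s,τ_s) be a complete set of representatives of the orbits of the conjugation action of C_{S_{2r}}(π) on Ω_{2r,r}(π). Then |Ω_{n,r}(π)| = Σ_{i=1}^{s} |C_{S_n}(π)| / |C_{S_n}(π) ∩ C_{S_n}(σ_i)|. -/

import Mathlib

open Finset

abbrev P (n : ℕ) := Equiv.Perm (Fin n)

def FixesOutside (n m : ℕ) (ρ : P n) : Prop :=
  ∀ i : Fin n, ¬ ((i : ℕ) < m) → ρ i = i

instance (n m : ℕ) : DecidablePred (FixesOutside n m) := fun _ =>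
  inferInstanceAs (Decidable (∀ _, _))

def Trs (n r s : ℕ) : Finset (P n) :=
  univ.filter fun σ => σ.support.card ≤ r ∧ FixesOutside n s σ

def OmS (n r s : ℕ) (π : P n) : Finset (P n × P n) :=
  ((Trs n r s) ×ˢ (Trs n r s)).filter fun p => p.1 * p.2 = π

def cent (n s : ℕ) (π : P n) : Finset (P n) :=
  univ.filter fun δ => δ * π = π * δ ∧ FixesOutside n s δ

/-! Every pair in `Ω_{n,r}(π)` moves at most `2r` points, so conjugating it by a permutation
that fixes the support of `π` and carries the moved points into `[2r]` lands in `Ω_{2r,r}(π)`.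
Two pairs of `Ω_{2r,r}(π)` that are conjugate in `S_n` are already conjugate by a permutation of
`[2r]`, which then centralizes `π`. Hence the `C_{S_n}(π)`-orbits of the representatives partition
`Ω_{n,r}(π)`, and orbit–stabilizer gives their sizes: the stabilizer of `(σ, τ)` is
`C(π) ∩ C(σ)` because `τ = σ⁻¹ π`. -/

namespace Equiv.Perm

variable {α : Type*} [DecidableEq α] [Fintype α]

theorem conj_eq_conj_of_eqOn_support {σ δ γ : Perm α} (h : Set.EqOn δ γ σ.support) :
    δ * σ * δ⁻¹ = γ * σ * γ⁻¹ := by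
  have hdisj : Disjoint (γ⁻¹ * δ) σ := fun i => by
    by_cases hi : i ∈ σ.support
    · left; simp [h hi]
    · right; exact notMem_support.1 hi
  calc δ * σ * δ⁻¹ = γ * ((γ⁻¹ * δ) * σ * (γ⁻¹ * δ)⁻¹) * γ⁻¹ := by group
    _ = γ * σ * γ⁻¹ := by rw [hdisj.commute.eq, mul_inv_cancel_right]

theorem exists_support_subset_extend {U A B : Finset α} (hA : A ⊆ U) (hB : B ⊆ U)
    (e : A ≃ B) : ∃ δ : Perm α, δ.support ⊆ U ∧ ∀ a : A, δ a = e a := by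
  let e' : {x : U // x.1 ∈ A} ≃ {x : U // x.1 ∈ B} :=
    (subtypeSubtypeEquivSubtype (hA ·)).trans (e.trans (subtypeSubtypeEquivSubtype (hB ·)).symm)
  refine ⟨ofSubtype e'.extendSubtype, ?_, fun a => ?_⟩
  · rw [support_ofSubtype]
    intro i hi
    obtain ⟨j, -, rfl⟩ := Finset.mem_map.1 hi
    exact j.2
  · rw [ofSubtype_apply_of_mem _ (hA a.2), e'.extendSubtype_apply_of_mem ⟨a, hA a.2⟩ a.2]
    rfl

end Equiv.Perm

theorem card_image_mul_card_filter_eq_card {G X : Type*} [Group G] [DecidableEq X] (H : Subgroup G)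
    {C : Finset G} (hC : ∀ g, g ∈ C ↔ g ∈ H) (f : G → X)
    (hf : ∀ a b, f a = f b ↔ f (a * b⁻¹) = f 1) :
    #(C.image f) * #{g ∈ C | f g = f 1} = #C := by
  classical
  have hfiber : ∀ y ∈ C.image f, #{g ∈ C | f g = y} = #{g ∈ C | f g = f 1} := by
    intro y hy
    obtain ⟨a, ha, rfl⟩ := mem_image.1 hy
    refine card_nbij' (· * a⁻¹) (· * a) (fun g hg => ?_) (fun g hg => ?_)
      (fun g _ => inv_mul_cancel_right g a) (fun g _ => mul_inv_cancel_right g a)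
    · simp only [coe_filter, Set.mem_ofPred_eq] at hg ⊢
      exact ⟨(hC _).2 (H.mul_mem ((hC g).1 hg.1) (H.inv_mem ((hC a).1 ha))), (hf g a).1 hg.2⟩
    · simp only [coe_filter, Set.mem_ofPred_eq] at hg ⊢
      refine ⟨(hC _).2 (H.mul_mem ((hC g).1 hg.1) ((hC a).1 ha)), (hf _ a).2 ?_⟩
      rw [mul_inv_cancel_right]
      exact hg.2
  rw [card_eq_sum_card_image f C, sum_congr rfl hfiber, sum_const, smul_eq_mul]

section conjPair

variable {G : Type*} [Group G]

def conjPair (δ : G) (x : G × G) : G × G := (δ⁻¹ * x.1 * δ, δ⁻¹ * x.2 * δ)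

@[simp]
theorem conjPair_one (x : G × G) : conjPair 1 x = x := by simp [conjPair]

theorem conjPair_mul (a b : G) (x : G × G) : conjPair (a * b) x = conjPair b (conjPair a x) := by
  simp [conjPair, mul_assoc]

theorem conjPair_inv_conjPair (δ : G) (x : G × G) : conjPair δ⁻¹ (conjPair δ x) = x := by
  rw [← conjPair_mul, mul_inv_cancel, conjPair_one]

theorem conjPair_eq_conjPair_iff {a b : G} {x : G × G} :
    conjPair a x = conjPair b x ↔ conjPair (a * b⁻¹) x = x := by
  constructor
  · intro h; rw [conjPair_mul, h, conjPair_inv_conjPair]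
  · intro h; conv_lhs => rw [← inv_mul_cancel_right a b, conjPair_mul, h]

theorem conjPair_eq_self_iff {δ : G} {x : G × G} :
    conjPair δ x = x ↔ Commute δ x.1 ∧ Commute δ x.2 := by
  simp only [conjPair, Prod.ext_iff, mul_assoc, inv_mul_eq_iff_eq_mul, Commute, SemiconjBy,
    eq_comm (a := x.1 * δ), eq_comm (a := x.2 * δ)]

theorem commute_of_conjPair_eq {δ π : G} {x y : G × G} (h : conjPair δ x = y)
    (hx : x.1 * x.2 = π) (hy : y.1 * y.2 = π) : Commute δ π := by
  subst hx h
  simp only [conjPair] at hy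
  rw [show δ⁻¹ * x.1 * δ * (δ⁻¹ * x.2 * δ) = δ⁻¹ * (x.1 * x.2 * δ) by group,
    inv_mul_eq_iff_eq_mul] at hy
  exact hy.symm

end conjPair

variable {n r s : ℕ} {π : P n}

theorem fixesOutside_iff_support_subset {m : ℕ} {ρ : P n} :
    FixesOutside n m ρ ↔ ρ.support ⊆ ({i | (i : ℕ) < m} : Finset (Fin n)) := by
  simp only [FixesOutside, subset_iff, Equiv.Perm.mem_support, mem_filter_univ]
  exact forall_congr' fun i => not_imp_comm

theorem fixesOutside_full (ρ : P n) : FixesOutside n n ρ := fun i h => absurd i.isLt h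

theorem fixesOutside_conj {m : ℕ} {δ σ : P n} (h : ∀ i ∈ σ.support, (δ i : ℕ) < m) :
    FixesOutside n m (δ * σ * δ⁻¹) := by
  rw [fixesOutside_iff_support_subset, Equiv.Perm.support_conj]
  intro j hj
  obtain ⟨i, hi, rfl⟩ := mem_map.1 hj
  simpa using h i hi

theorem mem_cent_iff {δ : P n} : δ ∈ cent n s π ↔ Commute δ π ∧ FixesOutside n s δ := by
  simp [cent, Commute, SemiconjBy]

theorem mem_cent_full_iff {δ : P n} : δ ∈ cent n n π ↔ δ ∈ Subgroup.centralizer {π} := by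
  simp [mem_cent_iff, fixesOutside_full, Subgroup.mem_centralizer_singleton_iff, Commute,
    SemiconjBy]

theorem cent_subset_cent_full : cent n s π ⊆ cent n n π := fun _ hδ =>
  mem_cent_iff.2 ⟨(mem_cent_iff.1 hδ).1, fixesOutside_full _⟩

theorem one_mem_cent : (1 : P n) ∈ cent n s π :=
  mem_cent_iff.2 ⟨Commute.one_left π, fun _ _ => rfl⟩

theorem mem_OmS_iff {p : P n × P n} :
    p ∈ OmS n r s π ↔ (#p.1.support ≤ r ∧ FixesOutside n s p.1) ∧
      (#p.2.support ≤ r ∧ FixesOutside n s p.2) ∧ p.1 * p.2 = π := by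
  simp [OmS, Trs, and_assoc]

theorem OmS_subset_OmS_full : OmS n r s π ⊆ OmS n r n π := fun p hp => by
  obtain ⟨⟨h1, -⟩, ⟨h2, -⟩, hπ⟩ := mem_OmS_iff.1 hp
  exact mem_OmS_iff.2 ⟨⟨h1, fixesOutside_full _⟩, ⟨h2, fixesOutside_full _⟩, hπ⟩

theorem conjPair_mem_OmS {s' : ℕ} {δ : P n} {p : P n × P n} (hδ : Commute δ π)
    (hp : p ∈ OmS n r s' π) (h1 : FixesOutside n s (δ⁻¹ * p.1 * δ))
    (h2 : FixesOutside n s (δ⁻¹ * p.2 * δ)) : conjPair δ p ∈ OmS n r s π := by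
  obtain ⟨⟨c1, -⟩, ⟨c2, -⟩, hπ⟩ := mem_OmS_iff.1 hp
  have hcard (σ : P n) : #(δ⁻¹ * σ * δ).support = #σ.support := by
    simpa using Equiv.Perm.card_support_conj (σ := δ⁻¹) (τ := σ)
  refine mem_OmS_iff.2 ⟨⟨(hcard _).trans_le c1, h1⟩, ⟨(hcard _).trans_le c2, h2⟩, ?_⟩
  simp only [conjPair]
  rw [show δ⁻¹ * p.1 * δ * (δ⁻¹ * p.2 * δ) = δ⁻¹ * (p.1 * p.2) * δ by group, hπ, mul_assoc,
    hδ.symm.eq, inv_mul_cancel_left]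

theorem conjPair_mem_OmS_full {δ : P n} {p : P n × P n} (hδ : δ ∈ cent n n π)
    (hp : p ∈ OmS n r n π) : conjPair δ p ∈ OmS n r n π :=
  conjPair_mem_OmS (mem_cent_iff.1 hδ).1 hp (fixesOutside_full _) (fixesOutside_full _)

theorem exists_mem_cent_conjPair_mem_OmS_two_mul (h2r : 2 * r ≤ n)
    (hπ : FixesOutside n (2 * r) π) {p : P n × P n} (hp : p ∈ OmS n r n π) :
    ∃ δ ∈ cent n n π, conjPair δ p ∈ OmS n r (2 * r) π := by
  obtain ⟨⟨c1, -⟩, ⟨c2, -⟩, hprod⟩ := mem_OmS_iff.1 hp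
  set W : Finset (Fin n) := {i | (i : ℕ) < 2 * r} with hW
  set M := p.1.support ∪ p.2.support
  have hcard : #(M \ W) ≤ #(W \ M) := by
    have hWcard : #W = 2 * r := by rw [hW, Fin.card_filter_val_lt, min_eq_right h2r]
    have hM : #M ≤ 2 * r := (card_union_le _ _).trans (by omega)
    have := card_sdiff_add_card_inter M W
    have := card_sdiff_add_card_inter W M
    rw [inter_comm] at this
    omega
  obtain ⟨B, hBWM, hB⟩ := exists_subset_card_eq hcard
  obtain ⟨δ, hδU, hδA⟩ := Equiv.Perm.exists_support_subset_extend subset_union_left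
    subset_union_right (equivOfCardEq hB.symm)
  -- `δ` moves the points of `M` outside `W` into the free slots `B ⊆ W \ M`
  have hδM : ∀ i ∈ M, (δ i : ℕ) < 2 * r := by
    intro i hi
    by_cases hiW : i ∈ W
    · have hiδ : i ∉ δ.support := fun h => by
        rcases mem_union.1 (hδU h) with h | h
        · exact (mem_sdiff.1 h).2 hiW
        · exact (mem_sdiff.1 (hBWM h)).2 hi
      rw [Equiv.Perm.notMem_support.1 hiδ]
      exact (mem_filter.1 hiW).2
    · rw [hδA ⟨i, mem_sdiff.2 ⟨hi, hiW⟩⟩]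
      exact (mem_filter.1 (mem_sdiff.1 (hBWM (Subtype.prop _))).1).2
  have hcomm : Commute δ π := by
    refine (Equiv.Perm.disjoint_iff_disjoint_support.2 ?_).commute
    have hπMW : π.support ⊆ M ∩ W :=
      subset_inter (hprod ▸ Equiv.Perm.support_mul_le p.1 p.2)
        (fixesOutside_iff_support_subset.1 hπ)
    refine disjoint_of_subset_left hδU (disjoint_of_subset_right hπMW ?_)
    exact disjoint_union_left.2 ⟨disjoint_sdiff_inter M W,
      disjoint_of_subset_left hBWM (sdiff_disjoint.mono_right inter_subset_left)⟩
  have hfix (σ : P n) (hσ : σ.support ⊆ M) : FixesOutside n (2 * r) (δ⁻¹⁻¹ * σ * δ⁻¹) := by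
    rw [inv_inv]
    exact fixesOutside_conj fun i hi => hδM i (hσ hi)
  exact ⟨δ⁻¹, mem_cent_iff.2 ⟨hcomm.inv_left, fixesOutside_full _⟩,
    conjPair_mem_OmS hcomm.inv_left hp (hfix _ subset_union_left) (hfix _ subset_union_right)⟩

theorem exists_mem_cent_conjPair_eq {γ : P n} {x y : P n × P n} (hx : x ∈ OmS n r s π)
    (hy : y ∈ OmS n r s π) (h : conjPair γ x = y) : ∃ δ ∈ cent n s π, conjPair δ x = y := by
  obtain ⟨⟨-, hx1⟩, ⟨-, hx2⟩, hxπ⟩ := mem_OmS_iff.1 hx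
  obtain ⟨⟨-, hy1⟩, ⟨-, hy2⟩, hyπ⟩ := mem_OmS_iff.1 hy
  set W : Finset (Fin n) := {i | (i : ℕ) < s}
  set M := x.1.support ∪ x.2.support
  have hsupport_conj (σ : P n) : σ.support.map γ⁻¹.toEmbedding = (γ⁻¹ * σ * γ).support := by
    simpa using (Equiv.Perm.support_conj (σ := γ⁻¹) (τ := σ)).symm
  have hMW := union_subset (fixesOutside_iff_support_subset.1 hx1)
    (fixesOutside_iff_support_subset.1 hx2)
  have hγMW : M.map γ⁻¹.toEmbedding ⊆ W := by
    rw [← h] at hy1 hy2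
    rw [map_union, hsupport_conj, hsupport_conj]
    exact union_subset (fixesOutside_iff_support_subset.1 hy1)
      (fixesOutside_iff_support_subset.1 hy2)
  obtain ⟨δ, hδW, hδM⟩ := Equiv.Perm.exists_support_subset_extend hMW hγMW
    (γ⁻¹.subtypeEquiv fun a => by rw [mem_map_equiv, Equiv.symm_apply_apply])
  have hconj (σ : P n) (hσ : σ.support ⊆ M) : δ⁻¹⁻¹ * σ * δ⁻¹ = γ⁻¹ * σ * γ := by
    rw [inv_inv]
    simpa using Equiv.Perm.conj_eq_conj_of_eqOn_support (σ := σ) (γ := γ⁻¹)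
      fun i hi => by simpa using hδM ⟨i, hσ hi⟩
  have hδx : conjPair δ⁻¹ x = y := by
    rw [← h]
    simp only [conjPair, hconj _ subset_union_left, hconj _ subset_union_right]
  refine ⟨δ⁻¹, mem_cent_iff.2 ⟨commute_of_conjPair_eq hδx hxπ hyπ, ?_⟩, hδx⟩
  rw [fixesOutside_iff_support_subset, Equiv.Perm.support_inv]
  exact hδW

def conjOrbit (π : P n) (x : P n × P n) : Finset (P n × P n) :=
  (cent n n π).image (conjPair · x)

theorem card_conjOrbit {x : P n × P n} (hx : x.1 * x.2 = π) :
    #(conjOrbit π x) = #(cent n n π) / #(cent n n π ∩ cent n n x.1) := by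
  have hstab : {δ ∈ cent n n π | conjPair δ x = conjPair 1 x} = cent n n π ∩ cent n n x.1 := by
    ext δ
    simp only [mem_filter, mem_inter, conjPair_one, conjPair_eq_self_iff, mem_cent_iff,
      fixesOutside_full, and_true]
    refine ⟨fun ⟨hπ, h1, _⟩ => ⟨hπ, h1⟩, fun ⟨hπ, h1⟩ => ⟨hπ, h1, ?_⟩⟩
    rw [show x.2 = x.1⁻¹ * π by rw [← hx, inv_mul_cancel_left]]
    exact h1.inv_right.mul_right hπ
  have key := card_image_mul_card_filter_eq_card (Subgroup.centralizer {π})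
    (fun _ => mem_cent_full_iff) (conjPair · x) fun _ _ => conjPair_eq_conjPair_iff
  rw [hstab] at key
  have hpos : 0 < #(cent n n π ∩ cent n n x.1) :=
    card_pos.2 ⟨1, mem_inter.2 ⟨one_mem_cent, one_mem_cent⟩⟩
  exact (Nat.div_eq_of_eq_mul_left hpos key.symm).symm

theorem OmS_eq_biUnion_conjOrbit (h2r : 2 * r ≤ n) (hπ : FixesOutside n (2 * r) π)
    {R : Finset (P n × P n)} (hRsub : R ⊆ OmS n r (2 * r) π)
    (hR : ∀ x ∈ OmS n r (2 * r) π, ∃ y ∈ R, ∃ δ ∈ cent n (2 * r) π, conjPair δ x = y) :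
    OmS n r n π = R.biUnion (conjOrbit π) := by
  refine Subset.antisymm (fun p hp => ?_) (biUnion_subset.2 fun x hx => ?_)
  · obtain ⟨δ₁, hδ₁, hq⟩ := exists_mem_cent_conjPair_mem_OmS_two_mul h2r hπ hp
    obtain ⟨y, hyR, δ₂, hδ₂, rfl⟩ := hR _ hq
    have hδ : (δ₁ * δ₂)⁻¹ ∈ cent n n π := mem_cent_full_iff.2 <| inv_mem <|
      mul_mem (mem_cent_full_iff.1 hδ₁) (mem_cent_full_iff.1 (cent_subset_cent_full hδ₂))
    refine mem_biUnion.2 ⟨_, hyR, mem_image.2 ⟨_, hδ, ?_⟩⟩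
    rw [← conjPair_mul δ₁ δ₂, conjPair_inv_conjPair]
  · intro p hp
    obtain ⟨δ, hδ, rfl⟩ := mem_image.1 hp
    exact conjPair_mem_OmS_full hδ (OmS_subset_OmS_full (hRsub hx))

theorem pairwiseDisjoint_conjOrbit {R : Finset (P n × P n)} (hRsub : R ⊆ OmS n r s π)
    (hR : ∀ x ∈ OmS n r s π, ∃! y, y ∈ R ∧ ∃ δ ∈ cent n s π, conjPair δ x = y) :
    (R : Set (P n × P n)).PairwiseDisjoint (conjOrbit π) := by
  intro x hx x' hx' hne
  refine disjoint_left.2 fun p hp hp' => hne ?_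
  obtain ⟨δ, -, rfl⟩ := mem_image.1 hp
  obtain ⟨δ', -, hδ'⟩ := mem_image.1 hp'
  obtain ⟨γ, hγ, hγx⟩ := exists_mem_cent_conjPair_eq (hRsub hx) (hRsub hx')
    (γ := δ * δ'⁻¹) (by rw [conjPair_mul, ← hδ', conjPair_inv_conjPair])
  exact (hR x (hRsub hx)).unique ⟨hx, 1, one_mem_cent, conjPair_one x⟩ ⟨hx', γ, hγ, hγx⟩

theorem omega_card_sum_general (n r : ℕ) (h2r : 2 * r ≤ n)
    (π : P n) (hπ : FixesOutside n (2 * r) π)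
    (R : Finset (P n × P n)) (hRsub : R ⊆ OmS n r (2 * r) π)
    (hR : ∀ x ∈ OmS n r (2 * r) π, ∃! y, y ∈ R ∧
      ∃ δ ∈ cent n (2 * r) π, (δ⁻¹ * x.1 * δ, δ⁻¹ * x.2 * δ) = y) :
    (OmS n r n π).card =
      ∑ x ∈ R, (cent n n π).card / ((cent n n π) ∩ (cent n n x.1)).card := by
  rw [OmS_eq_biUnion_conjOrbit h2r hπ hRsub fun x hx => (hR x hx).exists,
    card_biUnion (pairwiseDisjoint_conjOrbit hRsub hR)]
  exact sum_congr rfl fun x hx => card_conjOrbit (mem_OmS_iff.1 (hRsub hx)).2.2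

/-- Lemma 3.4: if R is a complete set of representatives of the orbits of the
conjugation action of C_{S_{2r}}(π) on Ω_{2r,r}(π), then
|Ω_{n,r}(π)| = Σ_{(σ,τ) ∈ R} |C_{S_n}(π)| / |C_{S_n}(π) ∩ C_{S_n}(σ)|. -/
theorem omega_card_sum (n r : ℕ) (hr : 1 ≤ r) (h2r : 2 * r ≤ n)
    (π : P n) (hπ : FixesOutside n (2 * r) π)
    (R : Finset (P n × P n)) (hRsub : R ⊆ OmS n r (2 * r) π)
    (hR : ∀ x ∈ OmS n r (2 * r) π, ∃! y, y ∈ R ∧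
      ∃ δ ∈ cent n (2 * r) π, (δ⁻¹ * x.1 * δ, δ⁻¹ * x.2 * δ) = y) :
    (OmS n r n π).card =
      ∑ x ∈ R, (cent n n π).card / ((cent n n π) ∩ (cent n n x.1)).card :=
  omega_card_sum_general n r h2r π hπ R hRsub hR
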